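/- arXiv:1610.09295 — 3 statements merged into one kernel-verified Lean document; each statement's English description precedes it below -/
import Mathlib

section
/- Let σ > 0 be small, a ∈ (-1,0), and define h_σ(θ) = σ + θ^{1-a} - θ². Then there is a constant c > 0 depending only on a (not on σ) such that for all θ ∈ (0, c] and all sufficiently small σ > 0, one has h_σ''(θ) + α(α+a) h_σ(θ) + a·cot(θ)·h_σ'(θ) < 0, for any fixed α ∈ (1, 1-a). -/
/-!
With `C = cot θ` the two derivative terms combine to
`h'' + a C h' = (1-a)(-a) θ^(-a-1) (1 - θC) - 2 - 2aθC`, and `0 ≤ 1 - θC ≤ θ²` on `(0, 1]`, so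
`h'' + a C h' ≤ (1-a)(-a) θ^(1-a) - 2(1+a)`. Since `0 < α(α+a) < 1-a` the zeroth-order term is at
most `(1-a)(σ + θ^(1-a))`, and `θ^(1-a) ≤ θ`, so the whole expression is at most
`(1-a)² θ + (1-a) σ - 2(1+a)`. This is negative once `θ ≤ (1+a)/(1-a)²` and `σ < (1+a)/(1-a)`,
bounds that do not involve `α`.
-/

open Real

/-- For `Δ_a u = Δu + (a / y) ∂_y u` on the upper half plane,
`Δ_a (r^α h(θ)) = r^(α-2) * angularPart a α h θ`. -/
noncomputable def angularPart (a α : ℝ) (h : ℝ → ℝ) (θ : ℝ) : ℝ :=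
  deriv (deriv h) θ + α * (α + a) * h θ + a * (cos θ / sin θ) * deriv h θ

noncomputable def barrierProfile (σ p θ : ℝ) : ℝ :=
  σ + θ ^ p - θ ^ 2

section Derivatives

variable (σ p : ℝ) {θ : ℝ}

theorem hasDerivAt_barrierProfile (hθ : 0 < θ) :
    HasDerivAt (barrierProfile σ p) (p * θ ^ (p - 1) - 2 * θ) θ := by
  have hpow : HasDerivAt (fun x : ℝ => x ^ 2) (2 * θ) θ := by
    simpa using hasDerivAt_pow 2 θ
  exact ((hasDerivAt_const θ σ).add (hasDerivAt_rpow_const (Or.inl hθ.ne'))).sub hpow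
    |>.congr_deriv (by ring)

theorem deriv_barrierProfile (hθ : 0 < θ) :
    deriv (barrierProfile σ p) θ = p * θ ^ (p - 1) - 2 * θ :=
  (hasDerivAt_barrierProfile σ p hθ).deriv

theorem deriv_deriv_barrierProfile (hθ : 0 < θ) :
    deriv (deriv (barrierProfile σ p)) θ = p * (p - 1) * θ ^ (p - 2) - 2 := by
  have hderiv : deriv (barrierProfile σ p) =ᶠ[nhds θ] fun t => p * t ^ (p - 1) - 2 * t := by
    filter_upwards [isOpen_Ioi.mem_nhds hθ] with t ht
    exact deriv_barrierProfile σ p ht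
  have hpow : HasDerivAt (fun t : ℝ => t ^ (p - 1)) ((p - 1) * θ ^ (p - 1 - 1)) θ :=
    hasDerivAt_rpow_const (Or.inl hθ.ne')
  have hlin : HasDerivAt (fun t : ℝ => 2 * t) 2 θ := by
    simpa using (hasDerivAt_id θ).const_mul 2
  have h : HasDerivAt (fun t => p * t ^ (p - 1) - 2 * t) (p * ((p - 1) * θ ^ (p - 1 - 1)) - 2) θ :=
    (hpow.const_mul p).sub hlin
  rw [hderiv.deriv_eq, h.deriv, sub_sub, one_add_one_eq_two]
  ring

end Derivatives

section Cotangent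

variable {θ : ℝ}

theorem mul_cos_div_sin_le_one (h0 : 0 < θ) (hπ : θ < π / 2) : θ * (cos θ / sin θ) ≤ 1 := by
  have hcos : 0 < cos θ := cos_pos_of_mem_Ioo ⟨by linarith [pi_pos], hπ⟩
  have hsin : 0 < sin θ := sin_pos_of_pos_of_lt_pi h0 (by linarith [pi_pos])
  have htan := lt_tan h0 hπ
  rw [tan_eq_sin_div_cos, lt_div_iff₀ hcos] at htan
  rw [← mul_div_assoc, div_le_one hsin]
  exact htan.le

theorem one_sub_sq_le_mul_cos_div_sin (h0 : 0 < θ) (h1 : θ ≤ 1) :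
    1 - θ ^ 2 ≤ θ * (cos θ / sin θ) := by
  have hsin : 0 < sin θ := sin_pos_of_pos_of_lt_pi h0 (by linarith [pi_gt_three])
  have hsin_le : sin θ ≤ θ := sin_le h0.le
  have hcos_ge : 1 - θ ^ 2 / 2 ≤ cos θ := one_sub_sq_div_two_le_cos
  rw [← mul_div_assoc, le_div_iff₀ hsin]
  nlinarith [mul_le_mul_of_nonneg_right hsin_le (sub_nonneg.2 (pow_le_one₀ h0.le h1 : θ ^ 2 ≤ 1))]

end Cotangent

section Estimate

variable {a θ : ℝ}

theorem deriv_deriv_add_cot_mul_deriv_barrierProfile_le (σ : ℝ) (ha : a ≤ 0) (h0 : 0 < θ)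
    (h1 : θ ≤ 1) :
    deriv (deriv (barrierProfile σ (1 - a))) θ
        + a * (cos θ / sin θ) * deriv (barrierProfile σ (1 - a)) θ
      ≤ (1 - a) * (-a) * θ ^ (1 - a) - 2 * (1 + a) := by
  set C := cos θ / sin θ
  set Q := θ ^ (-a - 1)
  have hθC : θ * C ≤ 1 := mul_cos_div_sin_le_one h0 (by linarith [pi_gt_three])
  have hθC' : 1 - θ * C ≤ θ ^ 2 := by linarith [one_sub_sq_le_mul_cos_div_sin h0 h1]
  have hQ1 : θ ^ (-a) = Q * θ := by
    rw [← rpow_add_one h0.ne']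
    ring_nf
  have hQ2 : θ ^ (1 - a) = Q * θ ^ 2 := by
    rw [pow_two, ← mul_assoc, ← rpow_add_one h0.ne', ← rpow_add_one h0.ne']
    ring_nf
  have hk : 0 ≤ (1 - a) * (-a) * Q :=
    mul_nonneg (mul_nonneg (by linarith) (neg_nonneg.2 ha)) (rpow_nonneg h0.le _)
  rw [deriv_deriv_barrierProfile _ _ h0, deriv_barrierProfile _ _ h0,
    show 1 - a - 2 = -a - 1 by ring, show 1 - a - 1 = -a by ring, hQ1, hQ2]
  linarith [mul_le_mul_of_nonneg_left hθC' hk,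
    mul_le_mul_of_nonneg_left hθC (neg_nonneg.2 ha)]

theorem angularPart_barrierProfile_le {α σ : ℝ} (ha : a ≤ 0) (hα₀ : 0 ≤ α * (α + a))
    (hα₁ : α * (α + a) ≤ 1 - a) (hσ : 0 ≤ σ) (h0 : 0 < θ) (h1 : θ ≤ 1) :
    angularPart a α (barrierProfile σ (1 - a)) θ ≤ (1 - a) ^ 2 * θ + (1 - a) * σ - 2 * (1 + a) := by
  have hderiv := deriv_deriv_add_cot_mul_deriv_barrierProfile_le σ ha h0 h1
  have hpow_le : θ ^ (1 - a) ≤ θ := by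
    simpa using rpow_le_rpow_of_exponent_ge h0 h1 (show 1 ≤ 1 - a by linarith)
  have hzeroth : α * (α + a) * barrierProfile σ (1 - a) θ ≤ (1 - a) * (σ + θ ^ (1 - a)) :=
    calc α * (α + a) * barrierProfile σ (1 - a) θ ≤ α * (α + a) * (σ + θ ^ (1 - a)) :=
          mul_le_mul_of_nonneg_left (by unfold barrierProfile; nlinarith) hα₀
      _ ≤ (1 - a) * (σ + θ ^ (1 - a)) := mul_le_mul_of_nonneg_right hα₁ (by positivity)
  unfold angularPart
  linarith [mul_le_mul_of_nonneg_left hpow_le (sq_nonneg (1 - a))]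

end Estimate

/-- The angular barrier inequality: for `a ∈ (-1,0)` there is `c > 0` (depending only
on `a`) such that for any `α ∈ (1, 1-a)` and all sufficiently small `σ > 0`, the
function `h_σ(θ) = σ + θ^(1-a) - θ²` satisfies
`h_σ'' + α(α+a) h_σ + a cot θ · h_σ' < 0` for all `θ ∈ (0, c]`. -/
theorem angular_barrier_negative (a : ℝ) (ha : a ∈ Set.Ioo (-1:ℝ) 0) :
    ∃ c > 0, ∀ α ∈ Set.Ioo 1 (1 - a), ∃ σ₀ > 0, ∀ σ ∈ Set.Ioo (0:ℝ) σ₀,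
      ∀ θ ∈ Set.Ioc (0:ℝ) c,
        deriv (deriv (fun θ : ℝ => σ + θ ^ (1 - a) - θ ^ 2)) θ
          + α * (α + a) * (σ + θ ^ (1 - a) - θ ^ 2)
          + a * (Real.cos θ / Real.sin θ) *
              deriv (fun θ : ℝ => σ + θ ^ (1 - a) - θ ^ 2) θ < 0 := by
  obtain ⟨ha₁, ha₀⟩ := ha
  have h1a : 0 < 1 - a := by linarith
  refine ⟨min 1 ((1 + a) / (1 - a) ^ 2), lt_min one_pos (by apply div_pos <;> nlinarith),
    fun α ⟨hα₁, hα₂⟩ => ⟨(1 + a) / (1 - a), div_pos (by linarith) h1a,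
      fun σ ⟨hσ₀, hσ⟩ θ ⟨hθ₀, hθ⟩ => ?_⟩⟩
  have hθ₁ : θ ≤ 1 := hθ.trans (min_le_left _ _)
  have hθc : (1 - a) ^ 2 * θ ≤ 1 + a := by
    rw [← le_div_iff₀' (by positivity)]
    exact hθ.trans (min_le_right _ _)
  have hσc : (1 - a) * σ < 1 + a := by rwa [← lt_div_iff₀' h1a]
  have hbound := angularPart_barrierProfile_le (α := α) ha₀.le (by nlinarith) (by nlinarith)
    hσ₀.le hθ₀ hθ₁
  change angularPart a α (barrierProfile σ (1 - a)) θ < 0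
  linarith
end

section
/- Let (A_k) be a sequence of closed subsets of the cylinder {|z'| ≤ 1/2} × ℝ in ℝⁿ such that for some constants C > 0, β ∈ (0,1) and all k large: for every z₀' with |z₀'| ≤ 1/2 and every point (z₀', z₀) ∈ A_k, one has A_k ∩ {|z' - z₀'| ≤ 2^{-2m-1}} ⊂ {|z_n - z₀| ≤ 2(1-ω)^m} for all m ≤ m_k where m_k → ∞ and (1-ω)^m ≤ C (2^{-2m})^β. Assume each A_k projects onto {|z'| ≤ 1/2} and contains 0. Then a subsequence of A_k converges uniformly (in Hausdorff distance on compact sets) to the graph {(z', w(z')) : |z'| ≤ 1/2} of a Hölder continuous function w with exponent β and w(0)=0. -/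
open Real Set

/-- Arzelà–Ascoli for sets: a sequence of closed sets with a uniform geometric
oscillation-decay property at all dyadic scales, projecting onto the ball of radius
1/2 and containing the origin, has a subsequence converging uniformly to the graph
of a `β`-Hölder continuous function `w` with `w(0) = 0`. -/
theorem set_compactness_to_holder_graph {n : ℕ}
    (A : ℕ → Set (EuclideanSpace ℝ (Fin (n - 1)) × ℝ))
    (hclosed : ∀ k, IsClosed (A k))
    (hsub : ∀ k, ∀ p ∈ A k, ‖p.1‖ ≤ 1/2)
    (C β ω : ℝ) (hC : 0 < C) (hβ : β ∈ Set.Ioo (0:ℝ) 1) (hω : ω ∈ Set.Ioo (0:ℝ) 1)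
    (mk : ℕ → ℕ) (hmk : Filter.Tendsto mk Filter.atTop Filter.atTop)
    (hosc : ∃ K : ℕ, ∀ k ≥ K, ∀ z₀' : EuclideanSpace ℝ (Fin (n - 1)), ‖z₀'‖ ≤ 1/2 →
      ∀ z₀ : ℝ, (z₀', z₀) ∈ A k → ∀ m ≤ mk k,
        ((1 - ω) ^ m ≤ C * ((2:ℝ) ^ (-(2 * (m:ℝ)))) ^ β ∧
          ∀ p ∈ A k, ‖p.1 - z₀'‖ ≤ (2:ℝ) ^ (-(2 * (m:ℝ)) - 1) →
            |p.2 - z₀| ≤ 2 * (1 - ω) ^ m))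
    (hproj : ∀ k, ∀ z' : EuclideanSpace ℝ (Fin (n - 1)), ‖z'‖ ≤ 1/2 →
      ∃ z : ℝ, (z', z) ∈ A k)
    (h0 : ∀ k, ((0 : EuclideanSpace ℝ (Fin (n - 1))), (0:ℝ)) ∈ A k) :
    ∃ φ : ℕ → ℕ, StrictMono φ ∧
      ∃ w : EuclideanSpace ℝ (Fin (n - 1)) → ℝ, w 0 = 0 ∧
        (∃ C' > 0, ∀ z₁ z₂ : EuclideanSpace ℝ (Fin (n - 1)), ‖z₁‖ ≤ 1/2 → ‖z₂‖ ≤ 1/2 →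
          |w z₁ - w z₂| ≤ C' * ‖z₁ - z₂‖ ^ β) ∧
        ∀ ε > 0, ∃ N : ℕ, ∀ k ≥ N,
          (∀ p ∈ A (φ k), ∃ q' : EuclideanSpace ℝ (Fin (n - 1)),
            ‖q'‖ ≤ 1/2 ∧ ‖p.1 - q'‖ + |p.2 - w q'| ≤ ε) ∧
          (∀ z' : EuclideanSpace ℝ (Fin (n - 1)), ‖z'‖ ≤ 1/2 →
            ∃ p ∈ A (φ k), ‖p.1 - z'‖ + |p.2 - w z'| ≤ ε) := by
  classical
  obtain ⟨Kc, hoscK⟩ := hosc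
  -- pairwise oscillation estimate inside a single A (k+Kc)
  have hKpair : ∀ k : ℕ, ∀ p ∈ A (k + Kc), ∀ q ∈ A (k + Kc), ∀ m ≤ mk (k + Kc),
      ‖p.1 - q.1‖ ≤ (2:ℝ) ^ (-(2 * (m:ℝ)) - 1) → |p.2 - q.2| ≤ 2 * (1 - ω) ^ m := by
    intro k p hp q hq m hm hle
    have h := (hoscK (k + Kc) (Nat.le_add_left _ _) q.1 (hsub _ q hq) q.2
      (by simpa using hq) m hm).2
    exact h p hp hle
  -- exponent facts
  have hr0 : ((2:ℝ) ^ (-(2 * ((0:ℕ):ℝ)) - 1)) = 1/2 := by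
    norm_num [Real.rpow_neg_one]
  have hrpos : ∀ m : ℕ, (0:ℝ) < (2:ℝ) ^ (-(2 * (m:ℝ)) - 1) :=
    fun m => Real.rpow_pos_of_pos (by norm_num) _
  -- vertical bound
  have hvert : ∀ k : ℕ, ∀ p ∈ A (k + Kc), |p.2| ≤ 2 := by
    intro k p hp
    have h := hKpair k p hp (0, 0) (h0 _) 0 (Nat.zero_le _)
      (by rw [hr0]; simpa using hsub _ p hp)
    simpa using h
  -- membership in the big compact ball
  set Q : Set (EuclideanSpace ℝ (Fin (n - 1)) × ℝ) := Metric.closedBall 0 2 with hQdef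
  have hQmem : ∀ k : ℕ, ∀ p ∈ A (k + Kc), p ∈ Q := by
    intro k p hp
    rw [hQdef, Metric.mem_closedBall, Prod.dist_eq]
    refine max_le ?_ ?_
    · simpa using (hsub _ p hp).trans (by norm_num)
    · simpa [Real.dist_eq] using hvert k p hp
  have hQcompact : IsCompact Q := isCompact_closedBall _ _
  haveI : CompactSpace Q := isCompact_iff_compactSpace.mp hQcompact
  -- the sets A (k + Kc) as nonempty compacts of Q
  have h0Q : ((0:EuclideanSpace ℝ (Fin (n - 1))), (0:ℝ)) ∈ Q := by
    rw [hQdef]; simp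
  set X : ℕ → TopologicalSpace.NonemptyCompacts Q := fun k =>
    ⟨⟨Subtype.val ⁻¹' A (k + Kc),
      ((hclosed _).preimage continuous_subtype_val).isCompact⟩,
      ⟨⟨((0:EuclideanSpace ℝ (Fin (n - 1))), (0:ℝ)), h0Q⟩, h0 _⟩⟩ with hXdef
  obtain ⟨Xl, φ', hφ', hconv⟩ := CompactSpace.tendsto_subseq X
  refine ⟨fun k => φ' k + Kc, fun a b hab => by simpa using hφ' hab, ?_⟩
  set φ : ℕ → ℕ := fun k => φ' k + Kc with hφdef
  -- the limit set
  set Al : Set (EuclideanSpace ℝ (Fin (n - 1)) × ℝ) := Subtype.val '' (Xl : Set Q) with hAldef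
  have hAlcompact : IsCompact Al := Xl.isCompact.image continuous_subtype_val
  have hAlne : Al.Nonempty := Xl.nonempty.image _
  -- hausdorff distance tends to zero
  have hd : Filter.Tendsto (fun k => dist (X (φ' k)) Xl) Filter.atTop (nhds 0) :=
    tendsto_iff_dist_tendsto_zero.mp hconv
  -- key approximation property
  have happrox : ∀ δ > (0:ℝ), ∃ N : ℕ, ∀ k ≥ N,
      (∀ p ∈ A (φ k), ∃ q ∈ Al, dist p q ≤ δ) ∧
      (∀ q ∈ Al, ∃ p ∈ A (φ k), dist q p ≤ δ) := by
    intro δ hδ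
    have hev : ∀ᶠ k in Filter.atTop, dist (X (φ' k)) Xl < δ := by
      have := hd.eventually (gt_mem_nhds hδ)
      simpa using this
    obtain ⟨N, hN⟩ := hev.exists_forall_of_atTop
    refine ⟨N, fun k hk => ?_⟩
    have hdist : Metric.hausdorffDist (X (φ' k) : Set Q) (Xl : Set Q) < δ := hN k hk
    have hfin : EMetric.hausdorffEdist (X (φ' k) : Set Q) (Xl : Set Q) ≠ ⊤ := by
      apply Metric.hausdorffEdist_ne_top_of_nonempty_of_bounded (X (φ' k)).nonempty
        Xl.nonempty (X (φ' k)).isCompact.isBounded Xl.isCompact.isBounded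
    constructor
    · intro p hp
      have hpQ : p ∈ Q := hQmem (φ' k) p hp
      obtain ⟨q, hq, hqd⟩ := Metric.exists_dist_lt_of_hausdorffDist_lt
        (show (⟨p, hpQ⟩ : Q) ∈ (X (φ' k) : Set Q) from hp) hdist hfin
      exact ⟨q.val, ⟨q, hq, rfl⟩, le_of_lt hqd⟩
    · rintro q ⟨q', hq', rfl⟩
      obtain ⟨p, hp, hpd⟩ := Metric.exists_dist_lt_of_hausdorffDist_lt'
        hq' hdist hfin
      exact ⟨p.val, hp, by rw [dist_comm]; exact le_of_lt hpd⟩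
  -- mk (φ k) tends to infinity
  have hφge : ∀ k, k ≤ φ k := fun k => (hφ'.le_apply).trans (Nat.le_add_right _ _)
  have hmkφ : Filter.Tendsto (fun k => mk (φ k)) Filter.atTop Filter.atTop :=
    hmk.comp (Filter.tendsto_atTop_mono hφge Filter.tendsto_id)
  -- oscillation property of the limit set
  have hoscL : ∀ m : ℕ, ∀ p ∈ Al, ∀ q ∈ Al, ‖p.1 - q.1‖ < (2:ℝ) ^ (-(2 * (m:ℝ)) - 1) →
      |p.2 - q.2| ≤ 2 * (1 - ω) ^ m := by
    intro m p hp q hq hlt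
    refine le_of_forall_pos_le_add (fun ε hε => ?_)
    set δ : ℝ := min (ε/4) (((2:ℝ) ^ (-(2 * (m:ℝ)) - 1) - ‖p.1 - q.1‖)/2) with hδdef
    have hδpos : 0 < δ := lt_min (by linarith) (by linarith)
    obtain ⟨N, hN⟩ := happrox δ hδpos
    obtain ⟨k, hk1, hk2⟩ := ((hmkφ.eventually_ge_atTop m).and
      (Filter.eventually_ge_atTop N)).exists
    obtain ⟨hdir1, hdir2⟩ := hN k hk2
    obtain ⟨p', hp', hpd⟩ := hdir2 p hp
    obtain ⟨q', hq', hqd⟩ := hdir2 q hq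
    have h1 : ‖p.1 - p'.1‖ ≤ δ := by
      calc ‖p.1 - p'.1‖ = dist p.1 p'.1 := (dist_eq_norm _ _).symm
        _ ≤ dist p p' := by rw [Prod.dist_eq]; exact le_max_left _ _
        _ ≤ δ := hpd
    have h2 : ‖q.1 - q'.1‖ ≤ δ := by
      calc ‖q.1 - q'.1‖ = dist q.1 q'.1 := (dist_eq_norm _ _).symm
        _ ≤ dist q q' := by rw [Prod.dist_eq]; exact le_max_left _ _
        _ ≤ δ := hqd
    have h3 : |p.2 - p'.2| ≤ δ := by
      calc |p.2 - p'.2| = dist p.2 p'.2 := (Real.dist_eq _ _).symm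
        _ ≤ dist p p' := by rw [Prod.dist_eq]; exact le_max_right _ _
        _ ≤ δ := hpd
    have h4 : |q.2 - q'.2| ≤ δ := by
      calc |q.2 - q'.2| = dist q.2 q'.2 := (Real.dist_eq _ _).symm
        _ ≤ dist q q' := by rw [Prod.dist_eq]; exact le_max_right _ _
        _ ≤ δ := hqd
    have hsep : ‖p'.1 - q'.1‖ ≤ (2:ℝ) ^ (-(2 * (m:ℝ)) - 1) := by
      have : ‖p'.1 - q'.1‖ ≤ ‖p.1 - p'.1‖ + ‖p.1 - q.1‖ + ‖q.1 - q'.1‖ := by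
        have := norm_sub_le_norm_sub_add_norm_sub p'.1 p.1 q'.1
        have h' := norm_sub_le (p.1 - q'.1) (p.1 - q.1)
        calc ‖p'.1 - q'.1‖ ≤ ‖p'.1 - p.1‖ + ‖p.1 - q'.1‖ := norm_sub_le_norm_sub_add_norm_sub _ _ _
          _ ≤ ‖p'.1 - p.1‖ + (‖p.1 - q.1‖ + ‖q.1 - q'.1‖) := by
              gcongr
              exact norm_sub_le_norm_sub_add_norm_sub _ _ _
          _ = ‖p.1 - p'.1‖ + ‖p.1 - q.1‖ + ‖q.1 - q'.1‖ := by rw [norm_sub_rev p'.1]; ring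
      have hδle : δ ≤ ((2:ℝ) ^ (-(2 * (m:ℝ)) - 1) - ‖p.1 - q.1‖)/2 := min_le_right _ _
      linarith
    have hmain := hKpair (φ' k) p' hp' q' hq' m hk1 hsep
    have hδε : δ ≤ ε/4 := min_le_left _ _
    calc |p.2 - q.2| ≤ |p.2 - p'.2| + |p'.2 - q.2| := abs_sub_le _ _ _
      _ ≤ |p.2 - p'.2| + (|p'.2 - q'.2| + |q'.2 - q.2|) := by
          gcongr; exact abs_sub_le _ _ _
      _ ≤ δ + (2 * (1 - ω) ^ m + δ) := by
          refine add_le_add h3 (add_le_add hmain ?_)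
          rwa [abs_sub_comm]
      _ ≤ 2 * (1 - ω) ^ m + ε := by linarith
  -- projections of product distance
  have hfst : ∀ p q : EuclideanSpace ℝ (Fin (n - 1)) × ℝ, ‖p.1 - q.1‖ ≤ dist p q :=
    fun p q => by rw [← dist_eq_norm, Prod.dist_eq]; exact le_max_left _ _
  have hsnd : ∀ p q : EuclideanSpace ℝ (Fin (n - 1)) × ℝ, |p.2 - q.2| ≤ dist p q :=
    fun p q => by rw [← Real.dist_eq, Prod.dist_eq]; exact le_max_right _ _
  -- bounds on the limit set
  have hAlsub : ∀ p ∈ Al, ‖p.1‖ ≤ 1/2 := by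
    intro p hp
    refine le_of_forall_pos_le_add (fun ε hε => ?_)
    obtain ⟨N, hN⟩ := happrox ε hε
    obtain ⟨p', hp', hpd⟩ := (hN N le_rfl).2 p hp
    have h1 : ‖p.1 - p'.1‖ ≤ ε := (hfst p p').trans hpd
    have h2 : ‖p.1‖ ≤ ‖p.1 - p'.1‖ + ‖p'.1‖ := by
      simpa using norm_add_le (p.1 - p'.1) p'.1
    have h3 := hsub _ p' hp'
    linarith
  have hAlvert : ∀ p ∈ Al, |p.2| ≤ 2 := by
    intro p hp
    refine le_of_forall_pos_le_add (fun ε hε => ?_)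
    obtain ⟨N, hN⟩ := happrox ε hε
    obtain ⟨p', hp', hpd⟩ := (hN N le_rfl).2 p hp
    have h1 : |p.2 - p'.2| ≤ ε := (hsnd p p').trans hpd
    have h2 : |p.2| ≤ |p.2 - p'.2| + |p'.2| := by
      simpa using abs_add_le (p.2 - p'.2) p'.2
    have h3 := hvert _ p' hp'
    linarith
  -- the origin lies in the limit set
  have h0l : ((0 : EuclideanSpace ℝ (Fin (n - 1))), (0:ℝ)) ∈ Al := by
    rw [← hAlcompact.isClosed.closure_eq, Metric.mem_closure_iff]
    intro ε hε
    obtain ⟨N, hN⟩ := happrox (ε/2) (by linarith)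
    obtain ⟨q, hq, hqd⟩ := (hN N le_rfl).1 _ (h0 _)
    exact ⟨q, hq, lt_of_le_of_lt hqd (by linarith)⟩
  -- the limit set projects onto the ball
  have hsurj : ∀ z' : EuclideanSpace ℝ (Fin (n - 1)), ‖z'‖ ≤ 1/2 → ∃ z, (z', z) ∈ Al := by
    intro z' hz'
    have himg : IsCompact (Prod.fst '' Al) := hAlcompact.image continuous_fst
    have hmem : z' ∈ Prod.fst '' Al := by
      rw [← himg.isClosed.closure_eq, Metric.mem_closure_iff]
      intro ε hε
      obtain ⟨N, hN⟩ := happrox (ε/2) (by linarith)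
      obtain ⟨z, hz⟩ := hproj (φ N) z' hz'
      obtain ⟨q, hq, hqd⟩ := (hN N le_rfl).1 _ hz
      refine ⟨q.1, ⟨q, hq, rfl⟩, ?_⟩
      have h1 : ‖(z', z).1 - q.1‖ ≤ dist (z', z) q := hfst _ _
      have h2 : dist z' q.1 ≤ ε/2 := by
        rw [dist_eq_norm]; exact le_trans h1 hqd
      linarith
    obtain ⟨p, hp, hp1⟩ := hmem
    exact ⟨p.2, by rwa [show (z', p.2) = p from Prod.ext hp1.symm rfl]⟩
  -- vertical uniqueness in the limit set
  have htend : Filter.Tendsto (fun m : ℕ => 2 * (1 - ω) ^ m) Filter.atTop (nhds 0) := by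
    have h := tendsto_pow_atTop_nhds_zero_of_lt_one (by linarith [hω.2] : (0:ℝ) ≤ 1 - ω)
      (by linarith [hω.1] : (1:ℝ) - ω < 1)
    simpa using h.const_mul 2
  have huniq : ∀ (z' : EuclideanSpace ℝ (Fin (n - 1))) (a b : ℝ),
      (z', a) ∈ Al → (z', b) ∈ Al → a = b := by
    intro z' a b ha hb
    have h1 : ∀ m : ℕ, |a - b| ≤ 2 * (1 - ω) ^ m := by
      intro m
      have h := hoscL m (z', a) ha (z', b) hb (by simpa using hrpos m)
      simpa using h
    have h2 : |a - b| ≤ 0 := ge_of_tendsto' htend h1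
    have := abs_nonpos_iff.mp h2
    linarith [sub_eq_zero.mp this]
  -- the graph function
  set w : EuclideanSpace ℝ (Fin (n - 1)) → ℝ := fun z' =>
    if h : ∃ z, (z', z) ∈ Al then h.choose else 0 with hwdef
  have hw : ∀ z' z, (z', z) ∈ Al → w z' = z := by
    intro z' z hz
    have hex : ∃ z0, (z', z0) ∈ Al := ⟨z, hz⟩
    have : w z' = hex.choose := by rw [hwdef]; exact dif_pos hex
    rw [this]
    exact huniq z' _ z hex.choose_spec hz
  have hwmem : ∀ z', ‖z'‖ ≤ 1/2 → (z', w z') ∈ Al := by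
    intro z' hz'
    obtain ⟨z, hz⟩ := hsurj z' hz'
    rw [hw z' z hz]; exact hz
  -- geometric decay estimate holds for all m
  have hgeo : ∀ m : ℕ, (1 - ω) ^ m ≤ C * ((2:ℝ) ^ (-(2 * (m:ℝ)))) ^ β := by
    intro m
    obtain ⟨k, hk1, hk2⟩ := ((hmk.eventually_ge_atTop m).and
      (Filter.eventually_ge_atTop Kc)).exists
    exact (hoscK k hk2 0 (by norm_num) 0 (h0 k) m hk1).1
  -- Hölder estimate
  have hholder : ∀ z₁ z₂ : EuclideanSpace ℝ (Fin (n - 1)), ‖z₁‖ ≤ 1/2 → ‖z₂‖ ≤ 1/2 →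
      |w z₁ - w z₂| ≤ (16*C+8) * ‖z₁ - z₂‖ ^ β := by
    intro z₁ z₂ h₁ h₂
    have hr : (0:ℝ) ≤ ‖z₁ - z₂‖ := norm_nonneg _
    have p₁ := hwmem z₁ h₁
    have p₂ := hwmem z₂ h₂
    rcases eq_or_lt_of_le hr with h0r | h0r
    · have hz : z₁ = z₂ := by
        have := norm_eq_zero.mp h0r.symm
        exact sub_eq_zero.mp this
      rw [hz, sub_self, abs_zero]
      positivity
    rcases le_or_gt (1/2) ‖z₁ - z₂‖ with hbig | hsmall
    · have hb1 : |w z₁| ≤ 2 := hAlvert _ p₁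
      have hb2 : |w z₂| ≤ 2 := hAlvert _ p₂
      have h4 : |w z₁ - w z₂| ≤ 4 := (abs_sub _ _).trans (by linarith)
      have hrβ : (1/2:ℝ) ≤ ‖z₁ - z₂‖ ^ β := by
        have ha : (1/2:ℝ)^(1:ℝ) ≤ (1/2:ℝ)^β :=
          Real.rpow_le_rpow_of_exponent_ge (by norm_num) (by norm_num) hβ.2.le
        have hb : (1/2:ℝ)^β ≤ ‖z₁ - z₂‖^β := Real.rpow_le_rpow (by norm_num) hbig hβ.1.le
        calc (1/2:ℝ) = (1/2:ℝ)^(1:ℝ) := (Real.rpow_one _).symm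
          _ ≤ ‖z₁ - z₂‖^β := ha.trans hb
      have hnn : (0:ℝ) ≤ 16*C * ‖z₁ - z₂‖ ^ β :=
        mul_nonneg (by linarith) (Real.rpow_nonneg hr β)
      have hsplit : (16*C+8) * ‖z₁ - z₂‖ ^ β = 16*C * ‖z₁ - z₂‖ ^ β + 8 * ‖z₁ - z₂‖ ^ β := by
        ring
      linarith
    · -- 0 < ‖z₁ - z₂‖ < 1/2
      have hex : ∃ m : ℕ, (2:ℝ) ^ (-(2 * ((m+1:ℕ):ℝ)) - 1) ≤ ‖z₁ - z₂‖ := by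
        obtain ⟨m, hm⟩ := exists_pow_lt_of_lt_one h0r (by norm_num : (1/2:ℝ) < 1)
        refine ⟨m, le_trans ?_ hm.le⟩
        have hexp : (-(2 * ((m+1:ℕ):ℝ)) - 1) ≤ (-(m:ℝ)) := by
          push_cast; nlinarith [Nat.cast_nonneg (α := ℝ) m]
        calc (2:ℝ) ^ (-(2 * ((m+1:ℕ):ℝ)) - 1) ≤ (2:ℝ) ^ (-(m:ℝ)) :=
              Real.rpow_le_rpow_of_exponent_le (by norm_num) hexp
          _ = (1/2:ℝ)^m := by
              rw [Real.rpow_neg (by norm_num), Real.rpow_natCast]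
              simp [one_div, inv_pow]
      set m := Nat.find hex with hmdef
      have hPm : (2:ℝ) ^ (-(2 * ((m+1:ℕ):ℝ)) - 1) ≤ ‖z₁ - z₂‖ := Nat.find_spec hex
      have hlt : ‖z₁ - z₂‖ < (2:ℝ) ^ (-(2 * (m:ℝ)) - 1) := by
        rcases Nat.eq_zero_or_pos m with hm0 | hmpos
        · have hc : ((m:ℝ)) = 0 := by rw [hm0]; simp
          rw [hc]
          have : (2:ℝ) ^ (-(2 * (0:ℝ)) - 1) = 1/2 := by
            norm_num [Real.rpow_neg_one]
          rw [this]; exact hsmall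
        · have hmin := Nat.find_min hex (Nat.sub_lt hmpos one_pos)
          push_neg at hmin
          rw [← hmdef] at hmin
          have hmm : m - 1 + 1 = m := by omega
          rwa [hmm] at hmin
      have hoscw := hoscL m (z₁, w z₁) p₁ (z₂, w z₂) p₂ (by simpa using hlt)
      have hoscw' : |w z₁ - w z₂| ≤ 2 * (1 - ω) ^ m := by simpa using hoscw
      have hkey : (2:ℝ) ^ (-(2 * (m:ℝ))) ≤ 8 * ‖z₁ - z₂‖ := by
        have heq : (2:ℝ) ^ (-(2 * (m:ℝ))) = 8 * (2:ℝ) ^ (-(2 * ((m+1:ℕ):ℝ)) - 1) := by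
          have h8 : (8:ℝ) = (2:ℝ) ^ (3:ℝ) := by
            rw [show (3:ℝ) = ((3:ℕ):ℝ) by norm_num, Real.rpow_natCast]; norm_num
          rw [h8, ← Real.rpow_add (by norm_num)]
          congr 1
          push_cast; ring
        rw [heq]; linarith
      have hrpowle : ((2:ℝ) ^ (-(2 * (m:ℝ)))) ^ β ≤ 8 * ‖z₁ - z₂‖ ^ β := by
        have h1 : ((2:ℝ) ^ (-(2 * (m:ℝ)))) ^ β ≤ (8 * ‖z₁ - z₂‖) ^ β :=
          Real.rpow_le_rpow (le_of_lt (Real.rpow_pos_of_pos (by norm_num) _)) hkey hβ.1.le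
        have h2 : (8 * ‖z₁ - z₂‖) ^ β = 8 ^ β * ‖z₁ - z₂‖ ^ β :=
          Real.mul_rpow (by norm_num) hr
        have h3 : (8:ℝ) ^ β ≤ 8 := by
          calc (8:ℝ)^β ≤ (8:ℝ)^(1:ℝ) :=
                Real.rpow_le_rpow_of_exponent_le (by norm_num) hβ.2.le
            _ = 8 := Real.rpow_one 8
        calc ((2:ℝ) ^ (-(2 * (m:ℝ)))) ^ β ≤ 8 ^ β * ‖z₁ - z₂‖ ^ β := h1.trans (le_of_eq h2)
          _ ≤ 8 * ‖z₁ - z₂‖ ^ β :=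
              mul_le_mul_of_nonneg_right h3 (Real.rpow_nonneg hr β)
      calc |w z₁ - w z₂| ≤ 2 * (1 - ω) ^ m := hoscw'
        _ ≤ 2 * (C * ((2:ℝ) ^ (-(2 * (m:ℝ)))) ^ β) := by
            have := hgeo m; linarith
        _ ≤ 2 * (C * (8 * ‖z₁ - z₂‖ ^ β)) :=
            mul_le_mul_of_nonneg_left
              (mul_le_mul_of_nonneg_left hrpowle hC.le) (by norm_num)
        _ = 16*C * ‖z₁ - z₂‖ ^ β := by ring
        _ ≤ (16*C+8) * ‖z₁ - z₂‖ ^ β :=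
            mul_le_mul_of_nonneg_right (by linarith) (Real.rpow_nonneg hr β)
  -- conclusion
  refine ⟨w, hw _ _ h0l, ⟨16*C+8, by linarith, hholder⟩, ?_⟩
  intro ε hε
  obtain ⟨N, hN⟩ := happrox (ε/3) (by linarith)
  refine ⟨N, fun k hk => ⟨?_, ?_⟩⟩
  · intro p hp
    obtain ⟨q, hq, hqd⟩ := (hN k hk).1 p hp
    refine ⟨q.1, hAlsub q hq, ?_⟩
    have e1 : ‖p.1 - q.1‖ ≤ ε/3 := (hfst p q).trans hqd
    have e2 : |p.2 - q.2| ≤ ε/3 := (hsnd p q).trans hqd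
    have hwq : w q.1 = q.2 := hw q.1 q.2 (by simpa using hq)
    rw [hwq]; linarith
  · intro z' hz'
    obtain ⟨p, hp, hpd⟩ := (hN k hk).2 (z', w z') (hwmem z' hz')
    refine ⟨p, hp, ?_⟩
    have e1 : ‖(z', w z').1 - p.1‖ ≤ ε/3 := (hfst _ _).trans hpd
    have e2 : |(z', w z').2 - p.2| ≤ ε/3 := (hsnd _ _).trans hpd
    simp only at e1 e2
    rw [norm_sub_rev] at e1
    rw [abs_sub_comm] at e2
    linarith
end

section
/- Let Q ≥ 0 be a function on the half ball B₁⁺(x*) = {(x,y): |x-x*|²+y² < 1, y > 0} ⊂ ℝ^{n+1} satisfying (in the viscosity/classical sense) Δ_a Q ≤ -1 in the interior and the Neumann-type bound |∂_y^{1-a} Q| ≤ C₀ Q on {y = 0}, where a ∈ (-1,0), ∂_y^{1-a}Q(x) = lim_{y→0⁺} y^a Q_y(x,y). Then there is μ > 0 depending only on n, a, C₀ such that Q(x,y) ≥ μ² + μ y^{1-a} - (1/(2(n+1)))(|x-x*|² + y²) on B₁⁺(x*); in particular Q(x*,0) ≥ μ². -/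
/-!
Compare `Q` with the barrier `P = μ² + μ y^(1-a) - (|x - x*|² + y²) / (2(n+1))`, which
satisfies `Δ_a P = -(n + 1 + a) / (n + 1) > -1` and `y^a ∂_y P → μ(1-a)` as `y → 0⁺`.
Let `Q - P` attain its minimum over the closed half ball at `p₀`, and suppose the minimum is
negative. On the spherical part `P ≤ μ² + μ - 1/(2(n+1)) ≤ 0 ≤ Q`. In the interior the
second-order conditions for a minimum give `Δ_a Q ≥ Δ_a P > -1`. On the flat part
`Q(p₀) < μ²`, so the Neumann bound gives `y^a ∂_y (Q - P) → L - μ(1-a) < 0`, and `Q - P`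
strictly decreases as one moves up from `p₀`.
-/

open Real Set Filter Topology

theorem eventually_lt_of_hasDerivAt_neg {g g' : ℝ → ℝ} {x : ℝ}
    (hc : ContinuousWithinAt g (Ici x) x)
    (hd : ∀ᶠ y in 𝓝[>] x, HasDerivAt g (g' y) y ∧ g' y < 0) :
    ∀ᶠ y in 𝓝[>] x, g y < g x := by
  obtain ⟨u, hxu, hu⟩ := mem_nhdsGT_iff_exists_Ioo_subset.1 hd
  filter_upwards [Ioo_mem_nhdsGT hxu] with y hy
  have hanti : StrictAntiOn g (Icc x y) := by
    refine strictAntiOn_of_deriv_neg (convex_Icc x y) ?_ fun z hz => ?_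
    · intro z hz
      rcases hz.1.eq_or_lt with rfl | hxz
      · exact hc.mono Icc_subset_Ici_self
      · exact (hu ⟨hxz, hz.2.trans_lt hy.2⟩).1.continuousAt.continuousWithinAt
    · rw [interior_Icc] at hz
      have hz' := hu ⟨hz.1, hz.2.trans hy.2⟩
      rw [hz'.1.deriv]
      exact hz'.2
  exact hanti ⟨le_rfl, hy.1.le⟩ ⟨hy.1.le, le_rfl⟩ hy.1

theorem IsLocalMin.nonneg_of_hasDerivAt_of_hasDerivAt {g g' : ℝ → ℝ} {x c : ℝ}
    (hmin : IsLocalMin g x) (hg : ∀ᶠ t in 𝓝 x, HasDerivAt g (g' t) t)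
    (hg' : HasDerivAt g' c x) : 0 ≤ c := by
  by_contra! hc
  have hg'x : g' x = 0 := hmin.hasDerivAt_eq_zero hg.self_of_nhds
  have hslope : ∀ᶠ t in 𝓝[>] x, slope g' x t < 0 :=
    ((hasDerivAt_iff_tendsto_slope.1 hg').mono_left
      (nhdsWithin_mono _ fun t ht => ne_of_gt ht)).eventually (gt_mem_nhds hc)
  have hdecr : ∀ᶠ t in 𝓝[>] x, HasDerivAt g (g' t) t ∧ g' t < 0 := by
    filter_upwards [nhdsWithin_le_nhds hg, hslope, self_mem_nhdsWithin] with t hgt hs ht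
    rw [slope_def_field, hg'x, sub_zero] at hs
    refine ⟨hgt, ?_⟩
    by_contra! h
    exact hs.not_ge (div_nonneg h (sub_pos.2 (mem_Ioi.1 ht)).le)
  have hlt := eventually_lt_of_hasDerivAt_neg
    (hg.self_of_nhds.continuousAt.continuousWithinAt) hdecr
  obtain ⟨t, hlt, hle⟩ := (hlt.and (nhdsWithin_le_nhds hmin)).exists
  exact hlt.not_ge hle

section Line

variable {E F : Type*} [NormedAddCommGroup E] [NormedSpace ℝ E]
  [NormedAddCommGroup F] [NormedSpace ℝ F] {f : E → F} {p : E}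

theorem ContDiffAt.eventually_hasDerivAt_line (hf : ContDiffAt ℝ 2 f p) (v : E) :
    ∀ᶠ t in 𝓝 (0 : ℝ),
      HasDerivAt (fun s : ℝ => f (p + s • v)) (fderiv ℝ f (p + t • v) v) t := by
  have hline : Tendsto (fun t : ℝ => p + t • v) (𝓝 0) (𝓝 p) :=
    (continuous_const.add (continuous_id.smul continuous_const)).tendsto' 0 p (by simp)
  filter_upwards [hline.eventually (hf.eventually (by simp))] with t ht
  have : HasDerivAt (fun s : ℝ => p + s • v) v t := by
    simpa using ((hasDerivAt_id t).smul_const v).const_add p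
  exact (ht.differentiableAt (by simp)).hasFDerivAt.comp_hasDerivAt t this

theorem ContDiffAt.hasDerivAt_fderiv_line (hf : ContDiffAt ℝ 2 f p) (v : E) :
    HasDerivAt (fun t : ℝ => fderiv ℝ f (p + t • v) v)
      (iteratedFDeriv ℝ 2 f p ![v, v]) 0 := by
  have hline : HasDerivAt (fun s : ℝ => p + s • v) v 0 := by
    simpa using ((hasDerivAt_id (0 : ℝ)).smul_const v).const_add p
  have hD : DifferentiableAt ℝ (fderiv ℝ f) p :=
    (hf.fderiv_right (m := 1) (by norm_num)).differentiableAt (by norm_num)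
  have := ((ContinuousLinearMap.apply ℝ F v).hasFDerivAt.comp p
    hD.hasFDerivAt).comp_hasDerivAt_of_eq (0 : ℝ) hline (by simp)
  rw [iteratedFDeriv_two_apply]
  exact this

theorem IsLocalMin.comp_line {g : E → ℝ} (hmin : IsLocalMin g p) (v : E) :
    IsLocalMin (fun t : ℝ => g (p + t • v)) 0 := by
  have hmin' : IsLocalMin g (p + (0 : ℝ) • v) := by rwa [zero_smul, add_zero]
  exact hmin'.comp_continuous (g := fun t : ℝ => p + t • v) (by fun_prop)

end Line

theorem IsLocalMin.fderiv_line_eq_and_le_iteratedFDeriv_two {E : Type*}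
    [NormedAddCommGroup E] [NormedSpace ℝ E] {f : E → ℝ} {φ φ' : ℝ → ℝ} {c : ℝ} {p v : E}
    (hmin : IsLocalMin (fun t : ℝ => f (p + t • v) - φ t) 0) (hf : ContDiffAt ℝ 2 f p)
    (hφ : ∀ᶠ t in 𝓝 0, HasDerivAt φ (φ' t) t) (hφ' : HasDerivAt φ' c 0) :
    fderiv ℝ f p v = φ' 0 ∧ c ≤ iteratedFDeriv ℝ 2 f p ![v, v] := by
  have hg : ∀ᶠ t in 𝓝 0, HasDerivAt (fun t : ℝ => f (p + t • v) - φ t)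
      (fderiv ℝ f (p + t • v) v - φ' t) t := by
    filter_upwards [hf.eventually_hasDerivAt_line v, hφ] with t hft hφt
    exact hft.sub hφt
  constructor
  · simpa [sub_eq_zero] using hmin.hasDerivAt_eq_zero hg.self_of_nhds
  · linarith [hmin.nonneg_of_hasDerivAt_of_hasDerivAt hg ((hf.hasDerivAt_fderiv_line v).sub hφ')]

section HalfBall

variable {n : ℕ}

def closedHalfBall (xstar : EuclideanSpace ℝ (Fin n)) : Set (EuclideanSpace ℝ (Fin n) × ℝ) :=
  {p | ‖p.1 - xstar‖ ^ 2 + p.2 ^ 2 ≤ 1 ∧ 0 ≤ p.2}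

def openHalfBall (xstar : EuclideanSpace ℝ (Fin n)) : Set (EuclideanSpace ℝ (Fin n) × ℝ) :=
  {p | ‖p.1 - xstar‖ ^ 2 + p.2 ^ 2 < 1 ∧ 0 < p.2}

noncomputable def barrier (a μ : ℝ) (xstar : EuclideanSpace ℝ (Fin n))
    (p : EuclideanSpace ℝ (Fin n) × ℝ) : ℝ :=
  μ ^ 2 + μ * p.2 ^ (1 - a) - (1 / (2 * ((n : ℝ) + 1))) * (‖p.1 - xstar‖ ^ 2 + p.2 ^ 2)

/-- `Δ_a Q = y^(-a) div (y^a ∇Q) = Δ Q + (a / y) ∂_y Q` on `ℝⁿ × ℝ`. -/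
noncomputable def weightedLaplacian (a : ℝ) (Q : EuclideanSpace ℝ (Fin n) × ℝ → ℝ)
    (p : EuclideanSpace ℝ (Fin n) × ℝ) : ℝ :=
  (∑ i : Fin n, iteratedFDeriv ℝ 2 Q p
      ![(EuclideanSpace.single i 1, 0), (EuclideanSpace.single i 1, 0)])
    + iteratedFDeriv ℝ 2 Q p ![(0, 1), (0, 1)]
    + (a / p.2) * fderiv ℝ Q p (0, 1)

variable {a μ : ℝ} {xstar : EuclideanSpace ℝ (Fin n)}

theorem hasDerivAt_barrier_horizontal (p : EuclideanSpace ℝ (Fin n) × ℝ)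
    (w : EuclideanSpace ℝ (Fin n)) (t : ℝ) :
    HasDerivAt (fun s : ℝ => barrier a μ xstar (p + s • (w, 0)))
      (-(1 / (2 * ((n : ℝ) + 1))) * (2 * inner ℝ (p.1 + t • w - xstar) w)) t := by
  have hline : HasDerivAt (fun s : ℝ => p.1 + s • w - xstar) w t := by
    simpa using (((hasDerivAt_id t).smul_const w).const_add p.1).sub_const xstar
  have := ((hline.norm_sq.add_const (p.2 ^ 2)).const_mul (1 / (2 * ((n : ℝ) + 1)))).const_sub
    (μ ^ 2 + μ * p.2 ^ (1 - a))
  simpa [barrier] using this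

theorem hasDerivAt_deriv_barrier_horizontal (p : EuclideanSpace ℝ (Fin n) × ℝ)
    (w : EuclideanSpace ℝ (Fin n)) (t : ℝ) :
    HasDerivAt
      (fun s : ℝ => -(1 / (2 * ((n : ℝ) + 1))) * (2 * inner ℝ (p.1 + s • w - xstar) w))
      (-(1 / (2 * ((n : ℝ) + 1))) * (2 * ‖w‖ ^ 2)) t := by
  have hline : HasDerivAt (fun s : ℝ => p.1 + s • w - xstar) w t := by
    simpa using (((hasDerivAt_id t).smul_const w).const_add p.1).sub_const xstar
  have := ((hline.inner ℝ (hasDerivAt_const t w)).const_mul 2).const_mul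
    (-(1 / (2 * ((n : ℝ) + 1))))
  simpa [real_inner_self_eq_norm_sq] using this

theorem hasDerivAt_barrier_vertical (x : EuclideanSpace ℝ (Fin n)) {y : ℝ} (hy : 0 < y) :
    HasDerivAt (fun y' : ℝ => barrier a μ xstar (x, y'))
      (μ * (1 - a) * y ^ (-a) - (1 / (2 * ((n : ℝ) + 1))) * (2 * y)) y := by
  have := (((hasDerivAt_rpow_const (p := 1 - a) (Or.inl hy.ne')).const_mul μ).const_add
    (μ ^ 2)).sub (((hasDerivAt_pow 2 y).const_add (‖x - xstar‖ ^ 2)).const_mul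
      (1 / (2 * ((n : ℝ) + 1))))
  refine this.congr_deriv ?_
  rw [show (1 : ℝ) - a - 1 = -a by ring]
  push_cast
  ring

theorem hasDerivAt_deriv_barrier_vertical {y : ℝ} (hy : 0 < y) :
    HasDerivAt
      (fun y' : ℝ => μ * (1 - a) * y' ^ (-a) - (1 / (2 * ((n : ℝ) + 1))) * (2 * y'))
      (-(μ * (1 - a) * a * y ^ (-a - 1)) - 1 / ((n : ℝ) + 1)) y := by
  have := ((hasDerivAt_rpow_const (p := -a) (Or.inl hy.ne')).const_mul (μ * (1 - a))).sub
    (((hasDerivAt_id y).const_mul 2).const_mul (1 / (2 * ((n : ℝ) + 1))))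
  refine this.congr_deriv ?_
  field_simp

theorem isOpen_openHalfBall : IsOpen (openHalfBall xstar) :=
  (isOpen_lt (f := fun p : EuclideanSpace ℝ (Fin n) × ℝ => ‖p.1 - xstar‖ ^ 2 + p.2 ^ 2)
    (by fun_prop) continuous_const).inter (isOpen_lt continuous_const continuous_snd)

theorem isCompact_closedHalfBall : IsCompact (closedHalfBall xstar) := by
  have hclosed : IsClosed (closedHalfBall xstar) :=
    (isClosed_le (f := fun p : EuclideanSpace ℝ (Fin n) × ℝ => ‖p.1 - xstar‖ ^ 2 + p.2 ^ 2)
      (by fun_prop) continuous_const).inter (isClosed_le continuous_const continuous_snd)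
  refine (isCompact_closedBall ((xstar, 0) : EuclideanSpace ℝ (Fin n) × ℝ) 1).of_isClosed_subset
    hclosed fun p ⟨hp, hy⟩ => ?_
  rw [Metric.mem_closedBall, Prod.dist_eq, dist_eq_norm, Real.dist_eq, sub_zero]
  refine max_le ?_ ?_
  · nlinarith [norm_nonneg (p.1 - xstar)]
  · rw [abs_of_nonneg hy]; nlinarith [norm_nonneg (p.1 - xstar)]

theorem continuous_barrier (ha : a ≤ 1) : Continuous (barrier a μ xstar) := by
  unfold barrier
  have := Real.continuous_rpow_const (q := 1 - a) (by linarith)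
  fun_prop

theorem barrier_nonpos_of_sphere {p : EuclideanSpace ℝ (Fin n) × ℝ}
    (hp : ‖p.1 - xstar‖ ^ 2 + p.2 ^ 2 = 1) (hy : 0 ≤ p.2) (ha : a ≤ 1) (hμ : 0 ≤ μ)
    (hμn : μ ^ 2 + μ ≤ 1 / (2 * ((n : ℝ) + 1))) : barrier a μ xstar p ≤ 0 := by
  have hy1 : p.2 ^ (1 - a) ≤ 1 :=
    Real.rpow_le_one hy (by nlinarith [norm_nonneg (p.1 - xstar)]) (by linarith)
  rw [barrier, hp]
  nlinarith

variable {Q : EuclideanSpace ℝ (Fin n) × ℝ → ℝ}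

theorem IsLocalMin.neg_le_iteratedFDeriv_horizontal {p : EuclideanSpace ℝ (Fin n) × ℝ}
    (hmin : IsLocalMin (Q - barrier a μ xstar) p)
    (hQ : ContDiffAt ℝ 2 Q p) (i : Fin n) :
    -(1 / ((n : ℝ) + 1)) ≤ iteratedFDeriv ℝ 2 Q p
      ![(EuclideanSpace.single i 1, 0), (EuclideanSpace.single i 1, 0)] := by
  have hline : IsLocalMin (fun t : ℝ => Q (p + t • (EuclideanSpace.single i 1, 0))
      - barrier a μ xstar (p + t • (EuclideanSpace.single i 1, 0))) 0 :=
    hmin.comp_line _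
  have := (hline.fderiv_line_eq_and_le_iteratedFDeriv_two hQ
    (.of_forall (hasDerivAt_barrier_horizontal p _))
    (hasDerivAt_deriv_barrier_horizontal p _ 0)).2
  rw [PiLp.norm_single, norm_one] at this
  convert this using 1
  field_simp

theorem IsLocalMin.fderiv_vertical_eq_and_le_iteratedFDeriv {p : EuclideanSpace ℝ (Fin n) × ℝ}
    (hmin : IsLocalMin (Q - barrier a μ xstar) p) (hQ : ContDiffAt ℝ 2 Q p) (hy : 0 < p.2) :
    fderiv ℝ Q p (0, 1) = μ * (1 - a) * p.2 ^ (-a) - 1 / (2 * ((n : ℝ) + 1)) * (2 * p.2) ∧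
      -(μ * (1 - a) * a * p.2 ^ (-a - 1)) - 1 / ((n : ℝ) + 1) ≤
        iteratedFDeriv ℝ 2 Q p ![(0, 1), (0, 1)] := by
  have hline : IsLocalMin
      (fun t : ℝ => Q (p + t • (0, 1)) - barrier a μ xstar (p + t • (0, 1))) 0 :=
    hmin.comp_line _
  have hshift (s : ℝ) : p + s • (0, 1) = (p.1, p.2 + s) := by ext <;> simp
  have hpos : ∀ᶠ t in 𝓝 (0 : ℝ), 0 < p.2 + t :=
    ((continuous_const.add continuous_id).tendsto' 0 p.2 (by simp)).eventually (lt_mem_nhds hy)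
  simpa using hline.fderiv_line_eq_and_le_iteratedFDeriv_two hQ
    (φ' := fun t => μ * (1 - a) * (p.2 + t) ^ (-a) - 1 / (2 * ((n : ℝ) + 1)) * (2 * (p.2 + t)))
    (by
      filter_upwards [hpos] with t ht
      simpa only [hshift] using (hasDerivAt_barrier_vertical p.1 ht).comp_const_add p.2 t)
    ((hasDerivAt_deriv_barrier_vertical (by simpa using hy)).comp_const_add p.2 0)

theorem IsLocalMin.le_weightedLaplacian_of_sub_barrier {p : EuclideanSpace ℝ (Fin n) × ℝ}
    (hmin : IsLocalMin (Q - barrier a μ xstar) p)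
    (hQ : ContDiffAt ℝ 2 Q p) (hy : 0 < p.2) :
    -(((n : ℝ) + 1 + a) / ((n : ℝ) + 1)) ≤ weightedLaplacian a Q p := by
  have hsum := Finset.card_nsmul_le_sum Finset.univ _ _ fun i _ =>
    hmin.neg_le_iteratedFDeriv_horizontal hQ i
  obtain ⟨hfd, hvert⟩ := hmin.fderiv_vertical_eq_and_le_iteratedFDeriv hQ hy
  simp only [Finset.card_univ, Fintype.card_fin, nsmul_eq_mul] at hsum
  rw [Real.rpow_sub_one hy.ne'] at hvert
  have hdrift : (a / p.2) * (μ * (1 - a) * p.2 ^ (-a) - 1 / (2 * ((n : ℝ) + 1)) * (2 * p.2))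
      = μ * (1 - a) * a * (p.2 ^ (-a) / p.2) - a / ((n : ℝ) + 1) := by
    field_simp
  have hsplit : -(((n : ℝ) + 1 + a) / ((n : ℝ) + 1))
      = n * -(1 / ((n : ℝ) + 1)) - 1 / ((n : ℝ) + 1) - a / ((n : ℝ) + 1) := by
    field_simp; ring
  rw [weightedLaplacian, hfd, hdrift, hsplit]
  linarith

theorem eventually_sub_barrier_lt_of_tendsto {x₀ : EuclideanSpace ℝ (Fin n)} {L : ℝ}
    (ha : a ∈ Ioo (-1) 1)
    (hQc : ContinuousWithinAt (fun y => Q (x₀, y)) (Ici 0) 0)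
    (hQd : ∀ᶠ y in 𝓝[>] 0, DifferentiableAt ℝ (fun y' => Q (x₀, y')) y)
    (hL : Tendsto (fun y => y ^ a * deriv (fun y' => Q (x₀, y')) y) (𝓝[>] 0) (𝓝 L))
    (hLμ : L < μ * (1 - a)) :
    ∀ᶠ y in 𝓝[>] 0,
      (Q - barrier a μ xstar) (x₀, y) < (Q - barrier a μ xstar) (x₀, 0) := by
  set g' : ℝ → ℝ := fun y => deriv (fun y' => Q (x₀, y')) y
    - (μ * (1 - a) * y ^ (-a) - (1 / (2 * ((n : ℝ) + 1))) * (2 * y))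
  have hpow : Tendsto (fun y : ℝ => y ^ (a + 1)) (𝓝[>] 0) (𝓝 0) := by
    have := (Real.continuousAt_rpow_const 0 (a + 1) (Or.inr (by linarith [ha.1]))).tendsto
    rw [Real.zero_rpow (by linarith [ha.1])] at this
    exact this.mono_left nhdsWithin_le_nhds
  have hlim : Tendsto (fun y => y ^ a * g' y) (𝓝[>] 0) (𝓝 (L - μ * (1 - a))) := by
    have := (hL.sub_const (μ * (1 - a))).add (hpow.const_mul (1 / ((n : ℝ) + 1)))
    rw [mul_zero, add_zero] at this
    refine this.congr' ?_
    filter_upwards [self_mem_nhdsWithin] with y (hy : 0 < y)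
    simp only [g']
    rw [Real.rpow_add_one hy.ne', Real.rpow_neg hy.le]
    field_simp [(Real.rpow_pos_of_pos hy a).ne']
    ring
  refine eventually_lt_of_hasDerivAt_neg (g' := g')
    (hQc.sub ((continuous_barrier ha.2.le).comp
      (continuous_const.prodMk continuous_id)).continuousWithinAt) ?_
  filter_upwards [hQd, hlim.eventually (gt_mem_nhds (sub_neg.2 hLμ)), self_mem_nhdsWithin]
    with y hdy hneg (hy : 0 < y)
  exact ⟨hdy.hasDerivAt.sub (hasDerivAt_barrier_vertical x₀ hy),
    neg_of_mul_neg_right hneg (Real.rpow_pos_of_pos hy a).le⟩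

theorem not_isMinOn_sub_barrier_of_tendsto_lt {x₀ : EuclideanSpace ℝ (Fin n)} {L : ℝ}
    (ha : a ∈ Ioo (-1) 1)
    (hcont : ContinuousOn Q (closedHalfBall xstar)) (hQ : ContDiffOn ℝ 2 Q (openHalfBall xstar))
    (hx₀ : ‖x₀ - xstar‖ < 1)
    (hL : Tendsto (fun y => y ^ a * deriv (fun y' => Q (x₀, y')) y) (𝓝[>] 0) (𝓝 L))
    (hLμ : L < μ * (1 - a)) :
    ¬ IsMinOn (Q - barrier a μ xstar) (closedHalfBall xstar) (x₀, 0) := by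
  intro hmin
  have hnear : ∀ᶠ y in 𝓝 (0 : ℝ), ‖x₀ - xstar‖ ^ 2 + y ^ 2 < 1 :=
    ((by fun_prop : Continuous fun y : ℝ => ‖x₀ - xstar‖ ^ 2 + y ^ 2).tendsto' 0
      (‖x₀ - xstar‖ ^ 2) (by simp)).eventually
        (gt_mem_nhds (by nlinarith [norm_nonneg (x₀ - xstar)]))
  have hK : ∀ᶠ y in 𝓝[≥] 0, (x₀, y) ∈ closedHalfBall xstar := by
    filter_upwards [nhdsWithin_le_nhds hnear, self_mem_nhdsWithin] with y h1 (h2 : 0 ≤ y)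
    exact ⟨h1.le, h2⟩
  have hQc : ContinuousWithinAt (fun y => Q (x₀, y)) (Ici 0) 0 :=
    (hcont _ (hK.self_of_nhdsWithin self_mem_Ici)).comp_of_preimage_mem_nhdsWithin
      (continuous_const.prodMk continuous_id).continuousWithinAt hK
  have hQd : ∀ᶠ y in 𝓝[>] 0, DifferentiableAt ℝ (fun y' => Q (x₀, y')) y := by
    filter_upwards [nhdsWithin_le_nhds hnear, self_mem_nhdsWithin] with y h1 (h2 : 0 < y)
    have hU : (x₀, y) ∈ openHalfBall xstar := ⟨h1, h2⟩
    have hd : DifferentiableAt ℝ Q (x₀, y) :=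
      (hQ.contDiffAt (isOpen_openHalfBall.mem_nhds hU)).differentiableAt (by norm_num)
    exact hd.comp y ((differentiableAt_const x₀).prodMk differentiableAt_id)
  obtain ⟨y, hlt, hmem⟩ := ((eventually_sub_barrier_lt_of_tendsto ha hQc hQd hL hLμ).and
    (nhdsWithin_mono _ Ioi_subset_Ici_self hK)).exists
  exact hlt.not_ge (hmin hmem)

theorem barrier_le_of_weightedLaplacian_le {C₀ : ℝ}
    (ha : a ∈ Ioo (-1) 0) (hC₀ : 0 ≤ C₀) (hμ : 0 < μ)
    (hμn : μ ^ 2 + μ ≤ 1 / (2 * ((n : ℝ) + 1))) (hμC : C₀ * μ ≤ 1)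
    (hcont : ContinuousOn Q (closedHalfBall xstar)) (hQ : ContDiffOn ℝ 2 Q (openHalfBall xstar))
    (hQ0 : ∀ p ∈ closedHalfBall xstar, 0 ≤ Q p)
    (hPDE : ∀ p ∈ openHalfBall xstar, weightedLaplacian a Q p ≤ -1)
    (hNeu : ∀ x, ‖x - xstar‖ < 1 → ∃ L,
      Tendsto (fun y => y ^ a * deriv (fun y' => Q (x, y')) y) (𝓝[>] 0) (𝓝 L) ∧
        |L| ≤ C₀ * Q (x, 0)) :
    ∀ p ∈ closedHalfBall xstar, barrier a μ xstar p ≤ Q p := by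
  have ha' : a ∈ Ioo (-1) 1 := ⟨ha.1, ha.2.trans one_pos⟩
  obtain ⟨⟨x₀, y₀⟩, hp₀, hmin⟩ := isCompact_closedHalfBall.exists_isMinOn
    ⟨(xstar, 0), by simp [closedHalfBall]⟩
    (hcont.sub (continuous_barrier ha'.2.le).continuousOn)
  suffices h : 0 ≤ (Q - barrier a μ xstar) (x₀, y₀) from
    fun p hp => sub_nonneg.1 (h.trans (hmin hp))
  by_contra! hneg
  rcases hp₀.1.eq_or_lt with hsph | hin
  · exact hneg.not_ge (sub_nonneg.2
      ((barrier_nonpos_of_sphere hsph hp₀.2 ha'.2.le hμ.le hμn).trans (hQ0 _ hp₀)))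
  rcases hp₀.2.eq_or_lt with hbot | hy
  · obtain rfl : y₀ = 0 := hbot.symm
    have hx₀ : ‖x₀ - xstar‖ < 1 := by nlinarith [norm_nonneg (x₀ - xstar)]
    obtain ⟨L, hL, hLC⟩ := hNeu x₀ hx₀
    have hQμ : Q (x₀, 0) < μ ^ 2 := by
      simp only [Pi.sub_apply, barrier,
        Real.zero_rpow (by linarith [ha.2] : (1 : ℝ) - a ≠ 0)] at hneg
      nlinarith [norm_nonneg (x₀ - xstar)]
    refine not_isMinOn_sub_barrier_of_tendsto_lt ha' hcont hQ hx₀ hL ?_ hmin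
    calc L ≤ C₀ * Q (x₀, 0) := (le_abs_self L).trans hLC
      _ ≤ C₀ * μ ^ 2 := by gcongr
      _ ≤ μ := by nlinarith
      _ < μ * (1 - a) := by nlinarith [ha.2]
  · have hp₀U : (x₀, y₀) ∈ openHalfBall xstar := ⟨hin, hy⟩
    have hK : closedHalfBall xstar ∈ 𝓝 (x₀, y₀) :=
      mem_of_superset (isOpen_openHalfBall.mem_nhds hp₀U) fun _ hp => ⟨hp.1.le, hp.2.le⟩
    have hΔ := (hmin.isLocalMin hK).le_weightedLaplacian_of_sub_barrier
      (hQ.contDiffAt (isOpen_openHalfBall.mem_nhds hp₀U)) hy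
    have : ((n : ℝ) + 1 + a) / ((n : ℝ) + 1) < 1 :=
      (div_lt_one (by positivity)).2 (by linarith [ha.2])
    linarith [hPDE _ hp₀U]

end HalfBall

/-- Maximum principle barrier bound: if `Q ≥ 0` on the half ball `B₁⁺(x*)` satisfies
`Δ_a Q ≤ -1` in the interior and `|∂_y^(1-a) Q| ≤ C₀ Q` on `{y = 0}`, then for some
`μ > 0` depending only on `n, a, C₀`,
`Q(x,y) ≥ μ² + μ y^(1-a) - (|x-x*|² + y²)/(2(n+1))`; in particular `Q(x*,0) ≥ μ²`. -/
theorem max_principle_half_ball (n : ℕ) (a C₀ : ℝ)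
    (ha : a ∈ Set.Ioo (-1:ℝ) 0) (hC₀ : 0 < C₀) :
    ∃ μ > 0, ∀ (Q : EuclideanSpace ℝ (Fin n) × ℝ → ℝ)
      (xstar : EuclideanSpace ℝ (Fin n)),
      ContinuousOn Q {p | ‖p.1 - xstar‖ ^ 2 + p.2 ^ 2 ≤ 1 ∧ 0 ≤ p.2} →
      ContDiffOn ℝ 2 Q {p | ‖p.1 - xstar‖ ^ 2 + p.2 ^ 2 < 1 ∧ 0 < p.2} →
      (∀ p : EuclideanSpace ℝ (Fin n) × ℝ,
        ‖p.1 - xstar‖ ^ 2 + p.2 ^ 2 ≤ 1 → 0 ≤ p.2 → 0 ≤ Q p) →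
      (∀ p : EuclideanSpace ℝ (Fin n) × ℝ,
        ‖p.1 - xstar‖ ^ 2 + p.2 ^ 2 < 1 → 0 < p.2 →
        (∑ i : Fin n, iteratedFDeriv ℝ 2 Q p
            ![(EuclideanSpace.single i 1, (0:ℝ)), (EuclideanSpace.single i 1, (0:ℝ))])
          + iteratedFDeriv ℝ 2 Q p ![((0 : EuclideanSpace ℝ (Fin n)), (1:ℝ)),
              ((0 : EuclideanSpace ℝ (Fin n)), (1:ℝ))]
          + (a / p.2) * fderiv ℝ Q p ((0 : EuclideanSpace ℝ (Fin n)), (1:ℝ)) ≤ -1) →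
      (∀ x : EuclideanSpace ℝ (Fin n), ‖x - xstar‖ < 1 →
        ∃ L : ℝ, Tendsto (fun y : ℝ =>
            y ^ a * deriv (fun y' : ℝ => Q (x, y')) y) (nhdsWithin 0 (Set.Ioi 0))
            (nhds L) ∧ |L| ≤ C₀ * Q (x, 0)) →
      ((∀ p : EuclideanSpace ℝ (Fin n) × ℝ,
          ‖p.1 - xstar‖ ^ 2 + p.2 ^ 2 ≤ 1 → 0 ≤ p.2 →
          Q p ≥ μ ^ 2 + μ * p.2 ^ (1 - a)
            - (1 / (2 * ((n:ℝ) + 1))) * (‖p.1 - xstar‖ ^ 2 + p.2 ^ 2)) ∧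
        Q (xstar, 0) ≥ μ ^ 2) := by
  set μ := min C₀⁻¹ (1 / (4 * ((n : ℝ) + 1)))
  have hμ : 0 < μ := by positivity
  have hμC : C₀ * μ ≤ 1 :=
    calc C₀ * μ ≤ C₀ * C₀⁻¹ := by gcongr; exact min_le_left _ _
      _ = 1 := mul_inv_cancel₀ hC₀.ne'
  have hμn : μ ^ 2 + μ ≤ 1 / (2 * ((n : ℝ) + 1)) := by
    have h4 : μ * (4 * ((n : ℝ) + 1)) ≤ 1 :=
      (le_div_iff₀ (by positivity)).1 (min_le_right _ _)
    rw [le_div_iff₀ (by positivity)]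
    nlinarith [(n.cast_nonneg : (0 : ℝ) ≤ n)]
  refine ⟨μ, hμ, fun Q xstar hcont hQ hQ0 hPDE hNeu => ?_⟩
  have hle := barrier_le_of_weightedLaplacian_le (xstar := xstar) ha hC₀.le hμ hμn hμC hcont hQ
    (fun p hp => hQ0 p hp.1 hp.2) (fun p hp => hPDE p hp.1 hp.2) hNeu
  refine ⟨fun p h1 h2 => hle p ⟨h1, h2⟩, ?_⟩
  simpa [barrier, Real.zero_rpow (by linarith [ha.2] : (1 : ℝ) - a ≠ 0)] using
    hle (xstar, 0) ⟨by simp, le_rfl⟩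
end
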